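/- Assume U is nonempty and there exists x̄ ∈ X with p(x̄) ∈ ℝ (i.e., dom p ≠ ∅). The following statements are equivalent: (i) stable strong robust duality holds, i.e., for every x* ∈ X* there exist u ∈ U and y_u* ∈ Y_u* with p*(x*) = F_u*(x*, y_u*) = q(x*); (ii) ∂^ε p(x) = D^ε(x) for all ε ≥ 0 and all x ∈ X, where D^ε(x) := ⋃_{ε₁,ε₂≥0, ε₁+ε₂=ε} ⋃_{u∈I^{ε₁}(x)} proj^u_{X*} ∂^{ε₂}F_u(x, 0_u). -/

import Mathlib

/-! Everything reduces to the `ε`-Fenchel–Young characterization: when `h a` is finite,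
`x* ∈ ∂^ε h(a)` iff `h*(x*) ≤ ⟨x*, a⟩ - h(a) + ε`, and likewise for each `F_u`; moreover
`p* ≤ F_u*(·, y*)` always. Given duality at `x*` with witness `(u, y*)`, an `ε`-subgradient `x*`
of `p` at `x` yields `F_u*(x*, y*) ≤ ⟨x*, x⟩ - p(x) + ε`, which splits as `ε₁ = p(x) - F_u(x, 0)`
and `ε₂ = ε - ε₁ ≥ 0` with `(x*, y*) ∈ ∂^{ε₂} F_u(x, 0)`. Conversely, if `p*(x*)` is finite then
`x* ∈ ∂^ε p(x̄)` for the Fenchel–Young gap `ε`, and reading `x*` off `D^ε(x̄)` gives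
`F_u*(x*, y*) ≤ p*(x*)`, forcing equality throughout. -/

noncomputable section

namespace RobustDuality

/-- The set of `ε`-minimizers of an extended-real-valued function `h`:
`{z | h z ∈ ℝ ∧ h z ≤ inf h + ε}` (empty when `inf h ∉ ℝ`). -/
def epsArgmin {Z : Type*} (h : Z → EReal) (ε : ℝ) : Set Z :=
  {z | (∃ r : ℝ, h z = (r : EReal)) ∧ h z ≤ (⨅ w, h w) + (ε : EReal)}

variable {X : Type*} [AddCommGroup X] [Module ℝ X] [TopologicalSpace X]
  [IsTopologicalAddGroup X] [ContinuousSMul ℝ X] [LocallyConvexSpace ℝ X] [T2Space X]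

/-- `(M^ε h)(x*) := ε-argmin (h - x*)` for `h : X → EReal` and `x* ∈ X*`. -/
def M1 (h : X → EReal) (ε : ℝ) (xs : X →L[ℝ] ℝ) : Set X :=
  epsArgmin (fun x => h x - ((xs x : ℝ) : EReal)) ε

/-- Fenchel conjugate of `h : X → EReal`. -/
def conj1 (h : X → EReal) (xs : X →L[ℝ] ℝ) : EReal :=
  ⨆ x : X, ((xs x : ℝ) : EReal) - h x

/-- `ε`-subdifferential of `h : X → EReal` at `a`. -/
def epsSubdiff1 (h : X → EReal) (ε : ℝ) (a : X) : Set (X →L[ℝ] ℝ) :=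
  {xs | (∃ r : ℝ, h a = (r : EReal)) ∧
    ∀ x, h a + ((xs x - xs a - ε : ℝ) : EReal) ≤ h x}

section Pair

variable {Yu : Type*} [AddCommGroup Yu] [Module ℝ Yu] [TopologicalSpace Yu]
  [IsTopologicalAddGroup Yu] [ContinuousSMul ℝ Yu] [LocallyConvexSpace ℝ Yu] [T2Space Yu]

/-- Fenchel conjugate of `F : X × Y → EReal` at `(x*, y*)`. -/
def conj2 (F : X × Yu → EReal) (xs : X →L[ℝ] ℝ) (ys : Yu →L[ℝ] ℝ) : EReal :=
  ⨆ z : X × Yu, ((xs z.1 + ys z.2 : ℝ) : EReal) - F z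

/-- `(M^ε F)(x*, y*) := ε-argmin (F - (x*, y*))`. -/
def M2 (F : X × Yu → EReal) (ε : ℝ) (xs : X →L[ℝ] ℝ) (ys : Yu →L[ℝ] ℝ) : Set (X × Yu) :=
  epsArgmin (fun z => F z - ((xs z.1 + ys z.2 : ℝ) : EReal)) ε

/-- `ε`-subdifferential of `F : X × Y → EReal` at `a`, as a set of dual pairs. -/
def epsSubdiff2 (F : X × Yu → EReal) (ε : ℝ) (a : X × Yu) :
    Set ((X →L[ℝ] ℝ) × (Yu →L[ℝ] ℝ)) :=
  {zs | (∃ r : ℝ, F a = (r : EReal)) ∧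
    ∀ z, F a + ((zs.1 z.1 + zs.2 z.2 - zs.1 a.1 - zs.2 a.2 - ε : ℝ) : EReal) ≤ F z}

end Pair

variable {U : Type*} {Y : U → Type*} [∀ u, AddCommGroup (Y u)] [∀ u, Module ℝ (Y u)]
  [∀ u, TopologicalSpace (Y u)] [∀ u, IsTopologicalAddGroup (Y u)]
  [∀ u, ContinuousSMul ℝ (Y u)] [∀ u, LocallyConvexSpace ℝ (Y u)] [∀ u, T2Space (Y u)]

/-- The robust objective `p := sup_{u ∈ U} F_u (·, 0_u)`. -/
def pRob (F : ∀ u, X × Y u → EReal) (x : X) : EReal := ⨆ u, F u (x, 0)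

/-- `q := inf over u ∈ U and y* ∈ Y_u* of F_u*(·, y*)`. -/
def qRob (F : ∀ u, X × Y u → EReal) (xs : X →L[ℝ] ℝ) : EReal :=
  ⨅ (u : U) (ys : Y u →L[ℝ] ℝ), conj2 (F u) xs ys

/-- `S^ε(x*) := {x : p x ∈ ℝ ∧ p x - ⟨x*, x⟩ ≤ -q x* + ε}`. -/
def Sset (F : ∀ u, X × Y u → EReal) (ε : ℝ) (xs : X →L[ℝ] ℝ) : Set X :=
  {x | (∃ r : ℝ, pRob F x = (r : EReal)) ∧
    pRob F x - ((xs x : ℝ) : EReal) ≤ -qRob F xs + (ε : EReal)}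

/-- `J^ε(u) := {x : p x ∈ ℝ ∧ p x ≤ F_u(x, 0) + ε}`. -/
def Jset (F : ∀ u, X × Y u → EReal) (ε : ℝ) (u : U) : Set X :=
  {x | (∃ r : ℝ, pRob F x = (r : EReal)) ∧ pRob F x ≤ F u (x, 0) + (ε : EReal)}

/-- `A^{(ε₁,ε₂)}_{(u,y*)}(x*) := {x ∈ J^{ε₁}(u) : (x, 0) ∈ (M^{ε₂}F_u)(x*, y*)}`. -/
def Aset (F : ∀ u, X × Y u → EReal) (ε₁ ε₂ : ℝ) (u : U) (ys : Y u →L[ℝ] ℝ)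
    (xs : X →L[ℝ] ℝ) : Set X :=
  {x | x ∈ Jset F ε₁ u ∧ (x, (0 : Y u)) ∈ M2 (F u) ε₂ xs ys}

/-- `𝒜^ε(x*)`. -/
def calA (F : ∀ u, X × Y u → EReal) (ε : ℝ) (xs : X →L[ℝ] ℝ) : Set X :=
  ⋂ (η : ℝ) (_ : 0 < η),
    ⋃ (u : U) (ys : Y u →L[ℝ] ℝ) (ε₁ : ℝ) (ε₂ : ℝ)
      (_ : 0 ≤ ε₁) (_ : 0 ≤ ε₂) (_ : ε₁ + ε₂ = ε + η), Aset F ε₁ ε₂ u ys xs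

/-- `B^ε_{(u,y*)}(x*)`. -/
def Bset (F : ∀ u, X × Y u → EReal) (ε : ℝ) (u : U) (ys : Y u →L[ℝ] ℝ)
    (xs : X →L[ℝ] ℝ) : Set X :=
  ⋃ (ε₁ : ℝ) (ε₂ : ℝ) (_ : 0 ≤ ε₁) (_ : 0 ≤ ε₂) (_ : ε₁ + ε₂ = ε),
    Aset F ε₁ ε₂ u ys xs

/-- `B^ε(x*) := ⋃_{u, y*} B^ε_{(u,y*)}(x*)`. -/
def BsetAll (F : ∀ u, X × Y u → EReal) (ε : ℝ) (xs : X →L[ℝ] ℝ) : Set X :=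
  ⋃ (u : U) (ys : Y u →L[ℝ] ℝ), Bset F ε u ys xs

/-- `I^ε(x)`: the set of `ε`-active indices at `x`. -/
def Iset (F : ∀ u, X × Y u → EReal) (ε : ℝ) (x : X) : Set U :=
  {u | (∃ r : ℝ, pRob F x = (r : EReal)) ∧ pRob F x - (ε : EReal) ≤ F u (x, 0)}

/-- `C^ε(x)`. -/
def Cset (F : ∀ u, X × Y u → EReal) (ε : ℝ) (x : X) : Set (X →L[ℝ] ℝ) :=
  ⋂ (η : ℝ) (_ : 0 < η),
    ⋃ (ε₁ : ℝ) (ε₂ : ℝ) (_ : 0 ≤ ε₁) (_ : 0 ≤ ε₂) (_ : ε₁ + ε₂ = ε + η)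
      (u : U) (_ : u ∈ Iset F ε₁ x),
      Prod.fst '' epsSubdiff2 (F u) ε₂ (x, (0 : Y u))

/-- `D^ε(x)`. -/
def Dset (F : ∀ u, X × Y u → EReal) (ε : ℝ) (x : X) : Set (X →L[ℝ] ℝ) :=
  ⋃ (ε₁ : ℝ) (ε₂ : ℝ) (_ : 0 ≤ ε₁) (_ : 0 ≤ ε₂) (_ : ε₁ + ε₂ = ε)
    (u : U) (_ : u ∈ Iset F ε₁ x),
    Prod.fst '' epsSubdiff2 (F u) ε₂ (x, (0 : Y u))

/-- The exact active index set `I(x) := {u : F_u(x,0) = p(x)}` (when `p(x) ∈ ℝ`). -/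
def I0set (F : ∀ u, X × Y u → EReal) (x : X) : Set U :=
  {u | (∃ r : ℝ, pRob F x = (r : EReal)) ∧ F u (x, 0) = pRob F x}

/-- `D(x) := ⋃_{u ∈ I(x)} proj_{X*} ∂F_u(x, 0)`. -/
def D0set (F : ∀ u, X × Y u → EReal) (x : X) : Set (X →L[ℝ] ℝ) :=
  ⋃ (u : U) (_ : u ∈ I0set F x), Prod.fst '' epsSubdiff2 (F u) 0 (x, (0 : Y u))

/-- `B_{(u,y*)}(x*) := {x ∈ J(u) : (x, 0) ∈ (M F_u)(x*, y*)}`. -/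
def B0set (F : ∀ u, X × Y u → EReal) (u : U) (ys : Y u →L[ℝ] ℝ)
    (xs : X →L[ℝ] ℝ) : Set X :=
  {x | (∃ r : ℝ, pRob F x = (r : EReal)) ∧ F u (x, 0) = pRob F x ∧
    (x, (0 : Y u)) ∈ M2 (F u) 0 xs ys}

lemma coe_sub_le_coe_iff {t c : ℝ} {e : EReal} :
    (t : EReal) - e ≤ c ↔ ((t - c : ℝ) : EReal) ≤ e := by
  induction e with
  | bot =>
    simp only [EReal.coe_sub_bot, top_le_iff, le_bot_iff, EReal.coe_ne_top, EReal.coe_ne_bot]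
  | top => simp
  | coe e =>
    norm_cast
    constructor <;> intro <;> linarith

lemma exists_eq_coe_of_coe_le_of_ne_top {a : ℝ} {e : EReal} (ha : (a : EReal) ≤ e)
    (he : e ≠ ⊤) : ∃ s : ℝ, e = s :=
  ⟨_, (EReal.coe_toReal he (ne_bot_of_le_ne_bot (EReal.coe_ne_bot a) ha)).symm⟩

section Conjugate

omit [IsTopologicalAddGroup X] [ContinuousSMul ℝ X] [LocallyConvexSpace ℝ X] [T2Space X]
  [∀ u, IsTopologicalAddGroup (Y u)] [∀ u, ContinuousSMul ℝ (Y u)]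
  [∀ u, LocallyConvexSpace ℝ (Y u)] [∀ u, T2Space (Y u)]

variable {Yu : Type*} [AddCommGroup Yu] [Module ℝ Yu] [TopologicalSpace Yu]

lemma le_conj1 (h : X → EReal) (xs : X →L[ℝ] ℝ) (x : X) :
    ((xs x : ℝ) : EReal) - h x ≤ conj1 h xs :=
  le_iSup (fun x => ((xs x : ℝ) : EReal) - h x) x

lemma conj1_le_coe_iff {h : X → EReal} {xs : X →L[ℝ] ℝ} {c : ℝ} :
    conj1 h xs ≤ c ↔ ∀ x, ((xs x - c : ℝ) : EReal) ≤ h x := by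
  simp only [conj1, iSup_le_iff, coe_sub_le_coe_iff]

lemma conj2_le_coe_iff {F : X × Yu → EReal} {xs : X →L[ℝ] ℝ} {ys : Yu →L[ℝ] ℝ} {c : ℝ} :
    conj2 F xs ys ≤ c ↔ ∀ z, ((xs z.1 + ys z.2 - c : ℝ) : EReal) ≤ F z := by
  simp only [conj2, iSup_le_iff, coe_sub_le_coe_iff]

lemma mem_epsSubdiff1_iff_conj1_le {h : X → EReal} {ε r : ℝ} {a : X} (ha : h a = r)
    {xs : X →L[ℝ] ℝ} : xs ∈ epsSubdiff1 h ε a ↔ conj1 h xs ≤ ((xs a - r + ε : ℝ) : EReal) := by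
  simp only [epsSubdiff1, conj1_le_coe_iff, ha, ← EReal.coe_add, exists_apply_eq_apply',
    true_and]
  exact forall_congr' fun x => by ring_nf

lemma mem_epsSubdiff2_iff_conj2_le {F : X × Yu → EReal} {ε r : ℝ} {a : X × Yu} (ha : F a = r)
    {zs : (X →L[ℝ] ℝ) × (Yu →L[ℝ] ℝ)} :
    zs ∈ epsSubdiff2 F ε a ↔ conj2 F zs.1 zs.2 ≤ ((zs.1 a.1 + zs.2 a.2 - r + ε : ℝ) : EReal) := by
  simp only [epsSubdiff2, conj2_le_coe_iff, ha, ← EReal.coe_add, exists_apply_eq_apply',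
    true_and]
  exact forall_congr' fun x => by ring_nf

lemma conj1_pRob_le_conj2 (F : ∀ u, X × Y u → EReal) (u : U) (xs : X →L[ℝ] ℝ)
    (ys : Y u →L[ℝ] ℝ) : conj1 (pRob F) xs ≤ conj2 (F u) xs ys :=
  iSup_le fun x => calc
    ((xs x : ℝ) : EReal) - pRob F x ≤ ((xs x + ys 0 : ℝ) : EReal) - F u (x, 0) := by
      rw [map_zero, add_zero]
      exact EReal.sub_le_sub le_rfl (le_iSup (fun u => F u (x, 0)) u)
    _ ≤ conj2 (F u) xs ys := le_iSup (fun z : X × Y u => ((xs z.1 + ys z.2 : ℝ) : EReal) - F u z) _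

lemma conj1_pRob_le_qRob (F : ∀ u, X × Y u → EReal) (xs : X →L[ℝ] ℝ) :
    conj1 (pRob F) xs ≤ qRob F xs :=
  le_iInf fun u => le_iInf fun ys => conj1_pRob_le_conj2 F u xs ys

lemma conj_eq_qRob_of_conj2_le {F : ∀ u, X × Y u → EReal} {u : U} {xs : X →L[ℝ] ℝ}
    {ys : Y u →L[ℝ] ℝ} (h : conj2 (F u) xs ys ≤ conj1 (pRob F) xs) :
    conj1 (pRob F) xs = conj2 (F u) xs ys ∧ conj2 (F u) xs ys = qRob F xs := by
  have hconj := le_antisymm (conj1_pRob_le_conj2 F u xs ys) h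
  refine ⟨hconj, le_antisymm ?_ ((iInf_le _ u).trans (iInf_le _ ys))⟩
  exact hconj ▸ conj1_pRob_le_qRob F xs

lemma exists_conj2_le_of_mem_Dset {F : ∀ u, X × Y u → EReal} {ε r : ℝ} {x : X}
    (hx : pRob F x = r) {xs : X →L[ℝ] ℝ} (h : xs ∈ Dset F ε x) :
    ∃ (u : U) (ys : Y u →L[ℝ] ℝ), conj2 (F u) xs ys ≤ ((xs x - r + ε : ℝ) : EReal) := by
  simp only [Dset, Set.mem_iUnion, Set.mem_image] at h
  obtain ⟨ε₁, ε₂, -, -, hsum, u, ⟨-, hactive⟩, zs, hzs, rfl⟩ := h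
  obtain ⟨s, hs⟩ := hzs.1
  rw [hx, hs, ← EReal.coe_sub, EReal.coe_le_coe_iff] at hactive
  refine ⟨u, zs.2, ((mem_epsSubdiff2_iff_conj2_le hs).1 hzs).trans ?_⟩
  simp only [map_zero, add_zero, EReal.coe_le_coe_iff]
  linarith

lemma Dset_subset_epsSubdiff1 (F : ∀ u, X × Y u → EReal) (ε : ℝ) (x : X) :
    Dset F ε x ⊆ epsSubdiff1 (pRob F) ε x := by
  intro xs h
  obtain ⟨r, hr⟩ : ∃ r : ℝ, pRob F x = r := by
    simp only [Dset, Set.mem_iUnion] at h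
    obtain ⟨-, -, -, -, -, -, ⟨hr, -⟩, -⟩ := h
    exact hr
  obtain ⟨u, ys, hle⟩ := exists_conj2_le_of_mem_Dset hr h
  exact (mem_epsSubdiff1_iff_conj1_le hr).2 ((conj1_pRob_le_conj2 F u xs ys).trans hle)

lemma mem_Dset_of_mem_epsSubdiff1 {F : ∀ u, X × Y u → EReal} {u : U} {xs : X →L[ℝ] ℝ}
    {ys : Y u →L[ℝ] ℝ} (hconj : conj1 (pRob F) xs = conj2 (F u) xs ys) {ε : ℝ} {x : X}
    (h : xs ∈ epsSubdiff1 (pRob F) ε x) : xs ∈ Dset F ε x := by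
  obtain ⟨r, hr⟩ := h.1
  have hconj2 : conj2 (F u) xs ys ≤ ((xs x - r + ε : ℝ) : EReal) :=
    hconj ▸ (mem_epsSubdiff1_iff_conj1_le hr).1 h
  have hlow : ((r - ε : ℝ) : EReal) ≤ F u (x, 0) := by
    convert conj2_le_coe_iff.1 hconj2 (x, 0) using 2
    simp only [map_zero]
    ring
  have hup : F u (x, 0) ≤ r := hr ▸ le_iSup (fun u => F u (x, 0)) u
  obtain ⟨s, hs⟩ :=
    exists_eq_coe_of_coe_le_of_ne_top hlow (ne_top_of_le_ne_top (EReal.coe_ne_top r) hup)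
  rw [hs, EReal.coe_le_coe_iff] at hlow hup
  simp only [Dset, Set.mem_iUnion, Set.mem_image]
  refine ⟨r - s, ε - (r - s), by linarith, by linarith, by ring, u, ⟨⟨r, hr⟩, ?_⟩,
    (xs, ys), ?_, rfl⟩
  · rw [hr, hs, ← EReal.coe_sub, EReal.coe_le_coe_iff]
    linarith
  · rw [mem_epsSubdiff2_iff_conj2_le hs]
    convert hconj2 using 2
    simp only [map_zero]
    ring

end Conjugate

theorem stable_strong_robust_duality_iff_general
    (F : ∀ u, X × Y u → EReal) (hU : Nonempty U)
    (hdomp : ∃ xbar : X, ∃ r : ℝ, pRob F xbar = (r : EReal)) :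
    (∀ xs : X →L[ℝ] ℝ, ∃ (u : U) (ys : Y u →L[ℝ] ℝ),
       conj1 (pRob F) xs = conj2 (F u) xs ys ∧ conj2 (F u) xs ys = qRob F xs) ↔
    (∀ ε : ℝ, 0 ≤ ε → ∀ x : X, epsSubdiff1 (pRob F) ε x = Dset F ε x) := by
  obtain ⟨xbar, r, hr⟩ := hdomp
  constructor
  · intro hdual ε _ x
    refine Set.Subset.antisymm (fun xs hxs => ?_) (Dset_subset_epsSubdiff1 F ε x)
    obtain ⟨u, ys, hconj, -⟩ := hdual xs
    exact mem_Dset_of_mem_epsSubdiff1 hconj hxs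
  · intro hsubdiff xs
    rcases eq_or_ne (conj1 (pRob F) xs) ⊤ with htop | htop
    · obtain ⟨u⟩ := hU
      exact ⟨u, 0, conj_eq_qRob_of_conj2_le (htop ▸ le_top)⟩
    have hlow : ((xs xbar - r : ℝ) : EReal) ≤ conj1 (pRob F) xs := by
      rw [EReal.coe_sub, ← hr]
      exact le_conj1 (pRob F) xs xbar
    obtain ⟨c, hc⟩ := exists_eq_coe_of_coe_le_of_ne_top hlow htop
    rw [hc, EReal.coe_le_coe_iff] at hlow
    have hmem : xs ∈ epsSubdiff1 (pRob F) (r + c - xs xbar) xbar := by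
      rw [mem_epsSubdiff1_iff_conj1_le hr, hc, EReal.coe_le_coe_iff]
      linarith
    rw [hsubdiff _ (by linarith)] at hmem
    obtain ⟨u, ys, hle⟩ := exists_conj2_le_of_mem_Dset hr hmem
    refine ⟨u, ys, conj_eq_qRob_of_conj2_le (hle.trans ?_)⟩
    rw [hc, EReal.coe_le_coe_iff]
    linarith

/-- Theorem 7.1 (stable strong robust duality). -/
theorem stable_strong_robust_duality_iff
    (F : ∀ u, X × Y u → EReal) (hU : Nonempty U) (hF : ∀ u z, F u z ≠ ⊥)
    (hdomp : ∃ xbar : X, ∃ r : ℝ, pRob F xbar = (r : EReal)) :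
    (∀ xs : X →L[ℝ] ℝ, ∃ (u : U) (ys : Y u →L[ℝ] ℝ),
       conj1 (pRob F) xs = conj2 (F u) xs ys ∧ conj2 (F u) xs ys = qRob F xs) ↔
    (∀ ε : ℝ, 0 ≤ ε → ∀ x : X, epsSubdiff1 (pRob F) ε x = Dset F ε x) :=
  stable_strong_robust_duality_iff_general F hU hdomp

end RobustDuality
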